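/- arXiv:2302.10333 — 3 statements merged into one kernel-verified Lean document; each statement's English description precedes it below -/
import Mathlib

section
/- Let n be odd, b_0,…,b_n real distinct mod π, a real, B = Σ b_k. Then for z avoiding poles: sin((n+1)z−a)/∏_{k=0}^n sin(z−b_k) = Σ_{k=0}^n sin((n+1)b_k − a) cot(z−b_k) / ∏_{j≠k} sin(b_k−b_j) − 2·(−4)^{(n−1)/2} sin(B−a). -/
/-!
With `q = exp (z * I)`, `β k = exp (b k * I)`, `α = exp (a * I)`, every sine and cotangent in the
identity is a rational function of `w = q ^ 2` with poles at the nodes `γ k = β k ^ 2`. Up to the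
common factor `(2 * I) ^ n * ∏ β k / α`, the left side is
`(w ^ (n + 1) - α ^ 2) / ∏ (w - γ k)`. As `w ^ (n + 1) - α ^ 2 - ∏ (w - γ k)` has degree at
most `n`, Lagrange interpolation at the nodes gives its partial fraction expansion. Writing
`1 / (w - γ k)` through `cot (z - b k) = I * (w + γ k) / (w - γ k)` leaves a constant, which the
same expansion at `w = 0` evaluates; for odd `n` it is `-2 * (-4) ^ ((n - 1) / 2) * sin (B - a)`.
-/

open Finset Polynomial Lagrange Complex

namespace Lagrange

variable {F ι : Type*} [Field F] {s : Finset ι} {v : ι → F} {x : F}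

theorem degree_X_pow_card_sub_C_sub_nodal_lt (hs : s.Nonempty) (c : F) :
    (X ^ #s - C c - nodal s v).degree < (#s : WithBot ℕ) := by
  have hN : #s ≠ 0 := hs.card_ne_zero
  have h := degree_sub_lt_right (p := X ^ #s - C c) (q := nodal s v)
    (by rw [degree_X_pow_sub_C (Nat.pos_of_ne_zero hN), degree_nodal]) nodal_ne_zero
    (by rw [(monic_X_pow_sub_C c hN).leadingCoeff, nodal_monic.leadingCoeff])
  rwa [degree_nodal] at h

variable [DecidableEq ι]

theorem eval_div_eval_nodal {f : F[X]} (hvs : Set.InjOn v s) (hf : f.degree < #s)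
    (hx : ∀ i ∈ s, x ≠ v i) :
    f.eval x / (nodal s v).eval x
      = ∑ i ∈ s, nodalWeight s v i * (x - v i)⁻¹ * f.eval (v i) := by
  conv_lhs => rw [eq_interpolate hvs hf, eval_interpolate_not_at_node _ hx]
  rw [mul_div_cancel_left₀ _ (eval_nodal_not_at_node hx)]

theorem pow_card_sub_div_eval_nodal (hvs : Set.InjOn v s) (hs : s.Nonempty) (c : F)
    (hx : ∀ i ∈ s, x ≠ v i) :
    (x ^ #s - c) / (nodal s v).eval x
      = 1 + ∑ i ∈ s, nodalWeight s v i * (x - v i)⁻¹ * (v i ^ #s - c) := by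
  have h := eval_div_eval_nodal hvs (degree_X_pow_card_sub_C_sub_nodal_lt (v := v) hs c) hx
  have hnodes : ∀ i ∈ s, (X ^ #s - C c - nodal s v).eval (v i) = v i ^ #s - c := fun i hi => by
    simp [eval_nodal_at_node hi]
  rw [sum_congr rfl fun i hi => by rw [hnodes i hi]] at h
  have := eval_nodal_not_at_node (s := s) hx
  rw [← h]
  simp only [eval_sub, eval_pow, eval_X, eval_C]
  field_simp
  ring

theorem pow_card_sub_div_eval_nodal_eq_sum_add [NeZero (2 : F)] (hvs : Set.InjOn v s)
    (hs : s.Nonempty) (hv : ∀ i ∈ s, v i ≠ 0) (c : F) (hx : ∀ i ∈ s, x ≠ v i) :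
    (x ^ #s - c) / (nodal s v).eval x
      = ∑ i ∈ s, nodalWeight s v i * (v i ^ #s - c) * (x + v i) / (2 * v i * (x - v i))
        + (1 - (-1) ^ #s * c / ∏ i ∈ s, v i) / 2 := by
  have hx' := pow_card_sub_div_eval_nodal hvs hs c hx
  have h0 := pow_card_sub_div_eval_nodal hvs hs c fun i hi => (hv i hi).symm
  have hsplit : ∀ i ∈ s, nodalWeight s v i * (v i ^ #s - c) * (x + v i) / (2 * v i * (x - v i))
      = nodalWeight s v i * (x - v i)⁻¹ * (v i ^ #s - c)
        - nodalWeight s v i * (0 - v i)⁻¹ * (v i ^ #s - c) / 2 := fun i hi => by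
    have := hv i hi
    have := sub_ne_zero_of_ne (hx i hi)
    field_simp
    ring
  have hnodal0 : (nodal s v).eval 0 = (-1) ^ #s * ∏ i ∈ s, v i := by
    simp [eval_nodal, ← prod_const, ← prod_mul_distrib]
  rw [sum_congr rfl hsplit, sum_sub_distrib, ← sum_div, eq_sub_of_add_eq' hx'.symm,
    eq_sub_of_add_eq' h0.symm, hnodal0, zero_pow hs.card_ne_zero]
  have : ∏ i ∈ s, v i ≠ 0 := prod_ne_zero_iff.mpr hv
  generalize (x ^ #s - c) / (nodal s v).eval x = Q
  have hsq : ((-1 : F) ^ #s) ^ 2 = 1 := by rw [← pow_mul, pow_mul', neg_one_sq, one_pow]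
  field_simp
  linear_combination c * hsq

end Lagrange

namespace Complex

noncomputable def sinExp (u v : ℂ) : ℂ := (u ^ 2 - v ^ 2) / (2 * I * (u * v))

noncomputable def cotExp (u v : ℂ) : ℂ := I * (u ^ 2 + v ^ 2) / (u ^ 2 - v ^ 2)

theorem sin_sub_eq_sinExp (x y : ℂ) : sin (x - y) = sinExp (exp (x * I)) (exp (y * I)) := by
  simp only [sin, sinExp, sub_mul, neg_sub, exp_sub]
  field_simp
  ring_nf
  rw [I_sq]
  ring

theorem cot_sub_eq_cotExp (x y : ℂ) : cot (x - y) = cotExp (exp (x * I)) (exp (y * I)) := by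
  rw [cot_eq_cos_div_sin, sin_sub_eq_sinExp, cotExp, sinExp]
  simp only [cos, sub_mul, neg_sub, exp_sub]
  rcases eq_or_ne (exp (x * I) ^ 2 - exp (y * I) ^ 2) 0 with h | h
  · simp [h]
  · field_simp

theorem sin_nat_mul_sub_eq_sinExp (N : ℕ) (x y : ℂ) :
    sin (N * x - y) = sinExp (exp (x * I) ^ N) (exp (y * I)) := by
  rw [sin_sub_eq_sinExp, mul_assoc, exp_nat_mul]

theorem sq_ne_sq_of_sinExp_ne_zero {u v : ℂ} (h : sinExp u v ≠ 0) : u ^ 2 ≠ v ^ 2 :=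
  fun huv => h (by rw [sinExp, huv, sub_self, zero_div])

theorem prod_sinExp {ι : Type*} (s : Finset ι) (u : ℂ) (v : ι → ℂ) :
    ∏ j ∈ s, sinExp u (v j)
      = (∏ j ∈ s, (u ^ 2 - v j ^ 2)) / ((2 * I * u) ^ #s * ∏ j ∈ s, v j) := by
  simp_rw [sinExp, prod_div_distrib, ← mul_assoc, prod_mul_distrib, prod_const, mul_pow]

section Scaling

variable {n : ℕ} {q α : ℂ} {β : Fin (n + 1) → ℂ}

theorem sinExp_pow_div_prod_sinExp (hq : q ≠ 0) (hqβ : ∀ k, q ^ 2 ≠ β k ^ 2) :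
    sinExp (q ^ (n + 1)) α / ∏ k, sinExp q (β k)
      = (2 * I) ^ n * (∏ k, β k) / α
        * (((q ^ 2) ^ (n + 1) - α ^ 2) / ∏ k, (q ^ 2 - β k ^ 2)) := by
  rw [prod_sinExp, card_univ, Fintype.card_fin, sinExp]
  have : ∏ k, (q ^ 2 - β k ^ 2) ≠ 0 := prod_ne_zero_iff.mpr fun k _ => sub_ne_zero.mpr (hqβ k)
  field_simp
  ring

theorem sinExp_pow_mul_cotExp_div_prod_sinExp (hβ : ∀ k, β k ≠ 0)
    (hβinj : Function.Injective fun k => β k ^ 2) (hqβ : ∀ k, q ^ 2 ≠ β k ^ 2)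
    (k : Fin (n + 1)) :
    sinExp (β k ^ (n + 1)) α * cotExp q (β k) / ∏ j ∈ univ.erase k, sinExp (β k) (β j)
      = (2 * I) ^ n * (∏ k, β k) / α
        * ((∏ j ∈ univ.erase k, (β k ^ 2 - β j ^ 2))⁻¹ * ((β k ^ 2) ^ (n + 1) - α ^ 2)
          * (q ^ 2 + β k ^ 2) / (2 * β k ^ 2 * (q ^ 2 - β k ^ 2))) := by
  rw [prod_sinExp, card_erase_of_mem (mem_univ k), card_univ, Fintype.card_fin,
    add_tsub_cancel_right, sinExp, cotExp, ← mul_prod_erase univ β (mem_univ k)]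
  have : ∏ j ∈ univ.erase k, (β k ^ 2 - β j ^ 2) ≠ 0 := prod_ne_zero_iff.mpr fun j hj =>
    sub_ne_zero.mpr fun h => (mem_erase.mp hj).1 (hβinj h).symm
  have : ∏ j ∈ univ.erase k, β j ≠ 0 := prod_ne_zero_iff.mpr fun j _ => hβ j
  have := hβ k
  have := sub_ne_zero.mpr (hqβ k)
  field_simp
  ring

theorem two_mul_neg_four_pow_mul_sinExp_prod {m : ℕ} (hm : n = 2 * m + 1)
    (hβ : ∀ k, β k ≠ 0) :
    2 * (-4 : ℂ) ^ m * sinExp (∏ k, β k) α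
      = -((2 * I) ^ n * (∏ k, β k) / α
          * ((1 - (-1) ^ (n + 1) * α ^ 2 / ∏ k, β k ^ 2) / 2)) := by
  have h2I : (2 * I) ^ n = (-4) ^ m * (2 * I) := by
    rw [hm, pow_succ, pow_mul, mul_pow, I_sq]
    norm_num
  have hsign : (-1 : ℂ) ^ (n + 1) = 1 := Even.neg_one_pow ⟨m + 1, by omega⟩
  have : ∏ k, β k ≠ 0 := prod_ne_zero_iff.mpr fun k _ => hβ k
  rw [prod_pow, sinExp, hsign, h2I]
  field_simp
  ring_nf
  rw [I_sq]
  ring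

theorem sinExp_div_prod_sinExp (hn : Odd n) (hq : q ≠ 0) (hβ : ∀ k, β k ≠ 0)
    (hβinj : Function.Injective fun k => β k ^ 2) (hqβ : ∀ k, q ^ 2 ≠ β k ^ 2) :
    sinExp (q ^ (n + 1)) α / ∏ k, sinExp q (β k)
      = (∑ k, sinExp (β k ^ (n + 1)) α * cotExp q (β k)
            / ∏ j ∈ univ.erase k, sinExp (β k) (β j))
        - 2 * (-4 : ℂ) ^ ((n - 1) / 2) * sinExp (∏ k, β k) α := by
  obtain ⟨m, hm⟩ := hn
  have hpf := pow_card_sub_div_eval_nodal_eq_sum_add hβinj.injOn univ_nonempty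
    (fun k _ => pow_ne_zero 2 (hβ k)) (α ^ 2) (fun k _ => hqβ k)
  simp only [card_univ, Fintype.card_fin, eval_nodal, nodalWeight, prod_inv_distrib] at hpf
  rw [sinExp_pow_div_prod_sinExp hq hqβ, hpf,
    sum_congr rfl fun k _ => sinExp_pow_mul_cotExp_div_prod_sinExp hβ hβinj hqβ k, ← mul_sum,
    show (n - 1) / 2 = m by omega, two_mul_neg_four_pow_mul_sinExp_prod hm hβ]
  ring

end Scaling

end Complex

theorem cot_expansion_odd (n : ℕ) (hn : Odd n) (b : Fin (n + 1) → ℝ)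
    (hb : ∀ j k, j ≠ k → Real.sin (b j - b k) ≠ 0)
    (a : ℝ) (B : ℝ) (hB : B = ∑ k, b k)
    (z : ℂ) (hz : ∀ k, Complex.sin (z - (b k : ℂ)) ≠ 0) :
    Complex.sin (((n : ℂ) + 1) * z - (a : ℂ)) / ∏ k, Complex.sin (z - (b k : ℂ))
      = (∑ k, Complex.sin (((n : ℂ) + 1) * (b k : ℂ) - (a : ℂ)) *
            Complex.cot (z - (b k : ℂ)) /
            ∏ j ∈ univ.erase k, Complex.sin ((b k : ℂ) - (b j : ℂ)))
        - 2 * (-4 : ℂ) ^ ((n - 1) / 2) * Complex.sin ((B : ℂ) - (a : ℂ)) := by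
  have hinj : Function.Injective fun k => cexp (b k * I) ^ 2 := fun j k hjk => by
    by_contra hne
    refine sq_ne_sq_of_sinExp_ne_zero ?_ hjk
    rw [← sin_sub_eq_sinExp]
    exact_mod_cast hb j k hne
  have hzb : ∀ k, cexp (z * I) ^ 2 ≠ cexp (b k * I) ^ 2 := fun k =>
    sq_ne_sq_of_sinExp_ne_zero (sin_sub_eq_sinExp z _ ▸ hz k)
  rw [← Nat.cast_succ, hB]
  simp_rw [sin_nat_mul_sub_eq_sinExp, sin_sub_eq_sinExp, cot_sub_eq_cotExp, ofReal_sum, sum_mul,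
    exp_sum]
  exact sinExp_div_prod_sinExp hn (exp_ne_zero _) (fun k => exp_ne_zero _) hinj hzb
end

section
/- Let b_0,…,b_n real distinct mod π, a real, B = Σ b_k, n even. Then for z avoiding poles: sin((n+2)z−a)/∏_{k=0}^n sin(z−b_k) = Σ_{k=0}^n sin((n+2)b_k − a)/[∏_{j≠k} sin(b_k−b_j) · sin(z−b_k)] + 2·(−4)^{n/2} cos(z + B − a). -/
open Finset Polynomial

-- helper: exp of nat-scaled arg
lemma exp_nsmul' (m : ℕ) (x : ℂ) : Complex.exp ((m:ℂ)*x) = Complex.exp x ^ m := by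
  rw [← Complex.exp_nat_mul]

lemma sin_exp_formula (x y : ℂ) :
    Complex.exp (2*Complex.I*x) - Complex.exp (2*Complex.I*y)
      = 2*Complex.I*Complex.sin (x - y) * Complex.exp (Complex.I*(x+y)) := by
  have e1 : Complex.exp (-(x-y)*Complex.I) * Complex.exp (Complex.I*(x+y))
      = Complex.exp (2*Complex.I*y) := by
    rw [← Complex.exp_add]; congr 1; ring
  have e2 : Complex.exp ((x-y)*Complex.I) * Complex.exp (Complex.I*(x+y))
      = Complex.exp (2*Complex.I*x) := by
    rw [← Complex.exp_add]; congr 1; ring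
  rw [Complex.sin]
  linear_combination e1 - e2 - ((Complex.exp (-(x-y)*Complex.I)
    - Complex.exp ((x-y)*Complex.I)) * Complex.exp (Complex.I*(x+y))) * Complex.I_mul_I

lemma cos_exp_formula (t : ℂ) :
    Complex.exp (Complex.I*t) + Complex.exp (-(Complex.I*t)) = 2 * Complex.cos t := by
  rw [Complex.cos]
  ring_nf

lemma keyPoly {m : ℕ} (hm : Odd m) (v : Fin m → ℂ) (hv : Function.Injective v)
    (hv0 : ∀ k, v k ≠ 0) (p q d : ℂ) (hp : p ≠ 0) (hqd : q * ∏ k, v k = d) (w : ℂ) :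
    p * w ^ (m + 1) - d
      = (p * w + q) * ∏ k, (w - v k)
        + w * ∑ k, (p * (v k) ^ (m + 1) - d) / v k *
            ∏ j ∈ univ.erase k, ((v k - v j)⁻¹ * (w - v j)) := by
  classical
  set F : ℂ[X] := C p * X ^ (m + 1) - C d with hF
  set Pr : ℂ[X] := ∏ k, (X - C (v k)) with hPr
  set L : ℂ[X] := (C p * X + C q) * Pr with hL
  have hPrMonic : Pr.Monic := monic_prod_of_monic _ _ fun k _ => monic_X_sub_C _
  have hPrDeg : Pr.natDegree = m := by
    rw [hPr, natDegree_prod_of_monic _ _ fun k _ => monic_X_sub_C _]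
    simp
  have hdegF : F.degree = ((m + 1 : ℕ) : WithBot ℕ) := by
    rw [hF, sub_eq_add_neg]
    rw [degree_add_eq_left_of_degree_lt]
    · exact degree_C_mul_X_pow _ hp
    · rw [degree_C_mul_X_pow _ hp, degree_neg]
      exact lt_of_le_of_lt (degree_C_le) (by exact_mod_cast WithBot.coe_lt_coe.mpr (Nat.succ_pos m))
  have hndF : F.natDegree = m + 1 := natDegree_eq_of_degree_eq_some hdegF
  have hlcF : F.leadingCoeff = p := by
    rw [leadingCoeff, hndF, hF]
    simp [coeff_X_pow, coeff_C]
  have hdegLin : (C p * X + C q).degree = 1 := by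
    simpa using degree_linear hp
  have hPrDeg' : Pr.degree = (m : WithBot ℕ) := by
    rw [degree_eq_natDegree hPrMonic.ne_zero, hPrDeg]
  have hdegL : L.degree = ((m + 1 : ℕ) : WithBot ℕ) := by
    rw [hL, degree_mul, hdegLin, hPrDeg']
    push_cast
    ring
  have hlcL : L.leadingCoeff = p := by
    rw [hL, leadingCoeff_mul, hPrMonic.leadingCoeff, mul_one]
    simpa using leadingCoeff_linear hp
  have hFne : F ≠ 0 := fun h => WithBot.bot_ne_coe (by rw [h, degree_zero] at hdegF; exact hdegF)
  set G : ℂ[X] := F - L with hG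
  have hdegG : G.degree < ((m + 1 : ℕ) : WithBot ℕ) := by
    rw [hG, ← hdegF]
    exact degree_sub_lt (hdegF.trans hdegL.symm) hFne (hlcF.trans hlcL.symm)
  have hLeval : ∀ k, L.eval (v k) = 0 := by
    intro k
    rw [hL, eval_mul, hPr, eval_prod]
    have : ∏ j, ((X : ℂ[X]) - C (v j)).eval (v k) = 0 :=
      Finset.prod_eq_zero (Finset.mem_univ k) (by simp)
    rw [this, mul_zero]
  have hG0 : G.eval 0 = 0 := by
    have hprodneg : ∏ k, (0 - v k) = -(∏ k, v k) := by
      have : ∀ k ∈ (univ : Finset (Fin m)), (0 : ℂ) - v k = (-1) * v k := by intros; ring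
      rw [Finset.prod_congr rfl this, Finset.prod_mul_distrib, Finset.prod_const]
      simp [hm.neg_one_pow]
    rw [hG, eval_sub, hL, eval_mul, hPr, eval_prod]
    simp only [eval_mul, eval_add, eval_sub, eval_C, eval_X, eval_pow, hF]
    rw [show ∏ j, ((0 : ℂ) - v j) = -(∏ k, v k) from by simpa using hprodneg]
    rw [zero_pow (Nat.succ_ne_zero m)]
    rw [← hqd]
    ring
  obtain ⟨H, hGH⟩ : (X : ℂ[X]) ∣ G :=
    X_dvd_iff.mpr (by rwa [coeff_zero_eq_eval_zero])
  have hdegH : H.degree < (m : WithBot ℕ) := by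
    rcases eq_or_ne H 0 with h0 | h0
    · rw [h0, degree_zero]
      exact WithBot.bot_lt_coe m
    · have : G.degree = 1 + H.degree := by rw [hGH, degree_mul, degree_X]
      rw [this] at hdegG
      have h1 : ((m + 1 : ℕ) : WithBot ℕ) = 1 + (m : WithBot ℕ) := by push_cast; ring
      rw [h1] at hdegG
      exact lt_of_add_lt_add_left hdegG
  have hinj : Set.InjOn v ↑(univ : Finset (Fin m)) := Function.Injective.injOn hv
  have hHinterp : H = Lagrange.interpolate univ v fun k => H.eval (v k) := by
    apply Lagrange.eq_interpolate hinj
    simpa using hdegH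
  have hHvk : ∀ k, H.eval (v k) = (p * (v k) ^ (m + 1) - d) / v k := by
    intro k
    have hGk : G.eval (v k) = v k * H.eval (v k) := by rw [hGH, eval_mul, eval_X]
    have hFk : F.eval (v k) = p * (v k) ^ (m + 1) - d := by rw [hF]; simp
    rw [hG, eval_sub, hLeval k, sub_zero, hFk] at hGk
    rw [eq_div_iff (hv0 k)]
    linear_combination -hGk
  have hmain : F.eval w = L.eval w + w * H.eval w := by
    have : F = L + X * H := by rw [← hGH, hG]; ring
    rw [this]
    simp
  have hFw : F.eval w = p * w ^ (m + 1) - d := by rw [hF]; simp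
  have hLw : L.eval w = (p * w + q) * ∏ k, (w - v k) := by
    rw [hL, eval_mul, hPr, eval_prod]
    simp
  have hHw : H.eval w = ∑ k, (p * (v k) ^ (m + 1) - d) / v k *
      ∏ j ∈ univ.erase k, ((v k - v j)⁻¹ * (w - v j)) := by
    conv_lhs => rw [hHinterp]
    rw [Lagrange.interpolate_apply, eval_finset_sum]
    refine Finset.sum_congr rfl fun k _ => ?_
    rw [eval_mul, eval_C, hHvk k, Lagrange.basis, eval_prod]
    refine congrArg _ (Finset.prod_congr rfl fun j _ => ?_)
    simp [Lagrange.basisDivisor]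
  rw [hFw, hLw, hHw] at hmain
  exact hmain


set_option maxHeartbeats 1600000 in
theorem sin_np2_expansion_even (n : ℕ) (hn : Even n) (b : Fin (n + 1) → ℝ)
    (hb : ∀ j k, j ≠ k → Real.sin (b j - b k) ≠ 0)
    (a : ℝ) (B : ℝ) (hB : B = ∑ k, b k)
    (z : ℂ) (hz : ∀ k, Complex.sin (z - (b k : ℂ)) ≠ 0) :
    Complex.sin (((n : ℂ) + 2) * z - (a : ℂ)) / ∏ k, Complex.sin (z - (b k : ℂ))
      = (∑ k, Complex.sin (((n : ℂ) + 2) * (b k : ℂ) - (a : ℂ)) /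
            ((∏ j ∈ univ.erase k, Complex.sin ((b k : ℂ) - (b j : ℂ))) *
              Complex.sin (z - (b k : ℂ))))
        + 2 * (-4 : ℂ) ^ (n / 2) * Complex.cos (z + (B : ℂ) - (a : ℂ)) := by
  classical
  have hI2 : (2*Complex.I : ℂ) ≠ 0 := by simp [Complex.I_ne_zero]
  have hsinb : ∀ j k : Fin (n+1), j ≠ k → Complex.sin ((b j : ℂ) - (b k : ℂ)) ≠ 0 := by
    intro j k hjk
    have h1 : ((b j : ℂ) - (b k : ℂ)) = ((b j - b k : ℝ) : ℂ) := by push_cast; ring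
    rw [h1, ← Complex.ofReal_sin]
    exact_mod_cast hb j k hjk
  have hβinj : Function.Injective (fun k : Fin (n+1) => Complex.exp (2*Complex.I*(b k : ℂ))) := by
    intro j k hjk
    simp only at hjk
    by_contra hne
    have h0 : 2*Complex.I*Complex.sin ((b j:ℂ) - (b k:ℂ))
        * Complex.exp (Complex.I*((b j:ℂ)+(b k:ℂ))) = 0 := by
      rw [← sin_exp_formula]
      simpa using sub_eq_zero.mpr hjk
    exact mul_ne_zero (mul_ne_zero hI2 (hsinb j k hne)) (Complex.exp_ne_zero _) h0
  have hβ0 : ∀ k : Fin (n+1), Complex.exp (2*Complex.I*(b k : ℂ)) ≠ 0 :=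
    fun k => Complex.exp_ne_zero _
  have hBc : ∑ k, ((b k : ℝ) : ℂ) = (B:ℂ) := by rw [hB]; push_cast; ring
  have hqd : Complex.exp (Complex.I*((a:ℂ) - 2*B))
      * ∏ k : Fin (n+1), Complex.exp (2*Complex.I*(b k : ℂ)) = Complex.exp (Complex.I*(a:ℂ)) := by
    rw [← Complex.exp_sum, ← Complex.exp_add]
    congr 1
    rw [← Finset.mul_sum, hBc]
    ring
  have hA := keyPoly (Even.add_one hn) (fun k : Fin (n+1) => Complex.exp (2*Complex.I*(b k : ℂ)))
    hβinj hβ0 (Complex.exp (-(Complex.I*(a:ℂ)))) (Complex.exp (Complex.I*((a:ℂ) - 2*B)))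
    (Complex.exp (Complex.I*(a:ℂ))) (Complex.exp_ne_zero _) hqd (Complex.exp (2*Complex.I*z))
  beta_reduce at hA
  simp only [show n+1+1 = n+2 from rfl] at hA
  -- conversion lemma for the sine numerators
  have e1gen : ∀ x : ℂ, Complex.exp (-(Complex.I*(a:ℂ))) * (Complex.exp (2*Complex.I*x))^(n+2)
        - Complex.exp (Complex.I*(a:ℂ))
      = 2*Complex.I*Complex.sin (((n:ℂ)+2)*x - (a:ℂ))
        * Complex.exp (Complex.I*(((n:ℂ)+2)*x)) := by
    intro x
    have h := sin_exp_formula (((n:ℂ)+2)*x) (a:ℂ)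
    have hsplit : Complex.exp (Complex.I*(((n:ℂ)+2)*x + (a:ℂ)))
        = Complex.exp (Complex.I*(((n:ℂ)+2)*x)) * Complex.exp (Complex.I*(a:ℂ)) := by
      rw [← Complex.exp_add]; congr 1; ring
    have hpow : (Complex.exp (2*Complex.I*x))^(n+2)
        = Complex.exp (2*Complex.I*(((n:ℂ)+2)*x)) := by
      rw [← Complex.exp_nat_mul]; congr 1; push_cast; ring
    have m1 : Complex.exp (-(Complex.I*(a:ℂ))) * Complex.exp (2*Complex.I*(a:ℂ))
        = Complex.exp (Complex.I*(a:ℂ)) := by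
      rw [← Complex.exp_add]; congr 1; ring
    have m2 : Complex.exp (-(Complex.I*(a:ℂ))) * Complex.exp (Complex.I*(a:ℂ)) = 1 := by
      rw [← Complex.exp_add, ← Complex.exp_zero]; congr 1; ring
    rw [hpow]
    rw [hsplit] at h
    linear_combination Complex.exp (-(Complex.I*(a:ℂ))) * h + m1
      + (2*Complex.I*Complex.sin (((n:ℂ)+2)*x - (a:ℂ))
          * Complex.exp (Complex.I*(((n:ℂ)+2)*x))) * m2
  have hcard : ∀ k : Fin (n+1), (univ.erase k).card = n := by
    intro k; rw [Finset.card_erase_of_mem (mem_univ k), Finset.card_univ]; simp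
  have hprodE : ∀ (x : ℂ) (k : Fin (n+1)),
      ∏ j ∈ univ.erase k, (Complex.exp (2*Complex.I*x) - Complex.exp (2*Complex.I*(b j : ℂ)))
        = (2*Complex.I)^n * (∏ j ∈ univ.erase k, Complex.sin (x - (b j:ℂ)))
          * Complex.exp (Complex.I*((n:ℂ)*x + (B:ℂ) - (b k:ℂ))) := by
    intro x k
    have h1 : ∀ j ∈ univ.erase k,
        Complex.exp (2*Complex.I*x) - Complex.exp (2*Complex.I*(b j : ℂ))
          = (2*Complex.I*Complex.sin (x - (b j:ℂ))) * Complex.exp (Complex.I*(x + (b j:ℂ))) := by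
      intro j _
      linear_combination sin_exp_formula x ((b j : ℝ) : ℂ)
    rw [Finset.prod_congr rfl h1, Finset.prod_mul_distrib, Finset.prod_mul_distrib,
      Finset.prod_const, hcard k, ← Complex.exp_sum]
    congr 2
    rw [← Finset.mul_sum]
    congr 1
    rw [Finset.sum_add_distrib, Finset.sum_const, hcard k,
      Finset.sum_erase_eq_sub (mem_univ k), hBc]
    ring
  have hprod_full : ∏ k : Fin (n+1), (Complex.exp (2*Complex.I*z) - Complex.exp (2*Complex.I*(b k : ℂ)))
      = (2*Complex.I)^(n+1) * (∏ k, Complex.sin (z - (b k:ℂ)))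
        * Complex.exp (Complex.I*(((n:ℂ)+1)*z + (B:ℂ))) := by
    have h1 : ∀ k ∈ (univ : Finset (Fin (n+1))),
        Complex.exp (2*Complex.I*z) - Complex.exp (2*Complex.I*(b k : ℂ))
          = (2*Complex.I*Complex.sin (z - (b k:ℂ))) * Complex.exp (Complex.I*(z + (b k:ℂ))) := by
      intro k _
      linear_combination sin_exp_formula z ((b k : ℝ) : ℂ)
    rw [Finset.prod_congr rfl h1, Finset.prod_mul_distrib, Finset.prod_mul_distrib,
      Finset.prod_const, Finset.card_univ, ← Complex.exp_sum]
    simp only [Fintype.card_fin]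
    congr 2
    rw [← Finset.mul_sum]
    congr 1
    rw [Finset.sum_add_distrib, Finset.sum_const, Finset.card_univ, hBc]
    simp only [Fintype.card_fin]
    push_cast
    ring
  have h4 : ((2:ℂ)*Complex.I)^n = (-4:ℂ)^(n/2) := by
    have h2 : ((2:ℂ)*Complex.I)^2 = -4 := by
      rw [mul_pow, Complex.I_sq]; norm_num
    have hmul : n / 2 * 2 = n := Nat.div_mul_cancel hn.two_dvd
    conv_lhs => rw [show n = 2*(n/2) by omega]
    rw [pow_mul, h2]
  have hPne : (∏ k, Complex.sin (z - (b k:ℂ))) ≠ 0 :=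
    Finset.prod_ne_zero_iff.mpr fun k _ => hz k
  have hDne : ∀ k : Fin (n+1), (∏ j ∈ univ.erase k, Complex.sin ((b k:ℂ) - (b j:ℂ))) ≠ 0 := by
    intro k
    exact Finset.prod_ne_zero_iff.mpr fun j hj => hsinb k j (Ne.symm (Finset.mem_erase.mp hj).1)
  have hlin : Complex.exp (-(Complex.I*(a:ℂ))) * Complex.exp (2*Complex.I*z)
        + Complex.exp (Complex.I*((a:ℂ) - 2*B))
      = 2*Complex.cos (z+(B:ℂ)-(a:ℂ)) * Complex.exp (Complex.I*(z-(B:ℂ))) := by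
    rw [← cos_exp_formula (z+(B:ℂ)-(a:ℂ)), add_mul, ← Complex.exp_add, ← Complex.exp_add,
      ← Complex.exp_add]
    congr 2 <;> ring
  have hexpE2 : Complex.exp (Complex.I*(z-(B:ℂ))) * Complex.exp (Complex.I*(((n:ℂ)+1)*z + (B:ℂ)))
      = Complex.exp (Complex.I*(((n:ℂ)+2)*z)) := by
    rw [← Complex.exp_add]; congr 1; ring
  have h5 : ((2:ℂ)*Complex.I)^(n+1) = (-4:ℂ)^(n/2)*(2*Complex.I) := by rw [pow_succ, h4]
  have e2 : (Complex.exp (-(Complex.I*(a:ℂ))) * Complex.exp (2*Complex.I*z)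
          + Complex.exp (Complex.I*((a:ℂ) - 2*B)))
        * ∏ k : Fin (n+1), (Complex.exp (2*Complex.I*z) - Complex.exp (2*Complex.I*(b k : ℂ)))
      = 2*(-4:ℂ)^(n/2)*Complex.cos (z+(B:ℂ)-(a:ℂ)) * (∏ k, Complex.sin (z - (b k:ℂ)))
        * (2*Complex.I*Complex.exp (Complex.I*(((n:ℂ)+2)*z))) := by
    rw [hprod_full, hlin]
    linear_combination (2*Complex.cos (z+(B:ℂ)-(a:ℂ)) * (∏ k, Complex.sin (z - (b k:ℂ)))
        * Complex.exp (Complex.I*(z-(B:ℂ))) * Complex.exp (Complex.I*(((n:ℂ)+1)*z + (B:ℂ)))) * h5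
      + (2*Complex.cos (z+(B:ℂ)-(a:ℂ)) * (∏ k, Complex.sin (z - (b k:ℂ)))
        * (-4:ℂ)^(n/2) * (2*Complex.I)) * hexpE2
  have e3 : ∀ k : Fin (n+1),
      Complex.exp (2*Complex.I*z) *
        ((Complex.exp (-(Complex.I*(a:ℂ))) * (Complex.exp (2*Complex.I*(b k : ℂ)))^(n+2)
            - Complex.exp (Complex.I*(a:ℂ))) / Complex.exp (2*Complex.I*(b k : ℂ)) *
          ∏ j ∈ univ.erase k,
            ((Complex.exp (2*Complex.I*(b k : ℂ)) - Complex.exp (2*Complex.I*(b j : ℂ)))⁻¹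
            * (Complex.exp (2*Complex.I*z) - Complex.exp (2*Complex.I*(b j : ℂ)))))
      = Complex.sin (((n:ℂ)+2)*(b k:ℂ) - (a:ℂ))
          * (∏ j ∈ univ.erase k, Complex.sin (z - (b j:ℂ)))
          / (∏ j ∈ univ.erase k, Complex.sin ((b k:ℂ) - (b j:ℂ)))
          * (2*Complex.I*Complex.exp (Complex.I*(((n:ℂ)+2)*z))) := by
    intro k
    have hsplit : ∏ j ∈ univ.erase k,
          ((Complex.exp (2*Complex.I*(b k:ℂ)) - Complex.exp (2*Complex.I*(b j:ℂ)))⁻¹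
          * (Complex.exp (2*Complex.I*z) - Complex.exp (2*Complex.I*(b j:ℂ))))
        = (∏ j ∈ univ.erase k,
            (Complex.exp (2*Complex.I*(b k:ℂ)) - Complex.exp (2*Complex.I*(b j:ℂ))))⁻¹
          * ∏ j ∈ univ.erase k,
            (Complex.exp (2*Complex.I*z) - Complex.exp (2*Complex.I*(b j:ℂ))) := by
      rw [Finset.prod_mul_distrib, Finset.prod_inv_distrib]
    rw [hsplit, hprodE z k, hprodE ((b k : ℝ):ℂ) k, e1gen ((b k:ℝ):ℂ)]
    have du : Complex.exp (2*Complex.I*z) = Complex.exp (Complex.I*z)^2 := by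
      rw [← exp_nsmul']; congr 1; push_cast; ring
    have dv : Complex.exp (2*Complex.I*(b k:ℂ)) = Complex.exp (Complex.I*(b k:ℂ))^2 := by
      rw [← exp_nsmul']; congr 1; push_cast; ring
    have dX1 : Complex.exp (Complex.I*(((n:ℂ)+2)*(b k:ℂ)))
        = Complex.exp (Complex.I*(b k:ℂ))^(n+2) := by
      rw [← exp_nsmul']; congr 1; push_cast; ring
    have dE : Complex.exp (Complex.I*(((n:ℂ)+2)*z)) = Complex.exp (Complex.I*z)^(n+2) := by
      rw [← exp_nsmul']; congr 1; push_cast; ring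
    have dX2 : Complex.exp (Complex.I*((n:ℂ)*z + (B:ℂ) - (b k:ℂ)))
        = Complex.exp (Complex.I*z)^n * Complex.exp (Complex.I*((B:ℂ) - (b k:ℂ))) := by
      rw [← exp_nsmul', ← Complex.exp_add]; congr 1; ring
    have dX3 : Complex.exp (Complex.I*((n:ℂ)*(b k:ℂ) + (B:ℂ) - (b k:ℂ)))
        = Complex.exp (Complex.I*(b k:ℂ))^n * Complex.exp (Complex.I*((B:ℂ) - (b k:ℂ))) := by
      rw [← exp_nsmul', ← Complex.exp_add]; congr 1; ring
    rw [du, dv, dX1, dE, dX2, dX3]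
    have hu : Complex.exp (Complex.I*z) ≠ 0 := Complex.exp_ne_zero _
    have hv : Complex.exp (Complex.I*(b k:ℂ)) ≠ 0 := Complex.exp_ne_zero _
    have hW : Complex.exp (Complex.I*((B:ℂ) - (b k:ℂ))) ≠ 0 := Complex.exp_ne_zero _
    generalize hg : ((2:ℂ)*Complex.I)^n = c
    have hc : c ≠ 0 := by rw [← hg]; exact pow_ne_zero _ hI2
    field_simp [hDne k, hc]
    ring
  rw [e1gen z, e2, Finset.mul_sum, Finset.sum_congr rfl (fun k _ => e3 k),
    ← Finset.sum_mul] at hA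
  have h2IE : (2*Complex.I*Complex.exp (Complex.I*(((n:ℂ)+2)*z))) ≠ 0 :=
    mul_ne_zero hI2 (Complex.exp_ne_zero _)
  have hstar : Complex.sin (((n:ℂ)+2)*z - (a:ℂ))
      = (∑ k, Complex.sin (((n:ℂ)+2)*(b k:ℂ) - (a:ℂ))
          * (∏ j ∈ univ.erase k, Complex.sin (z - (b j:ℂ)))
          / (∏ j ∈ univ.erase k, Complex.sin ((b k:ℂ) - (b j:ℂ))))
        + 2*(-4:ℂ)^(n/2)*Complex.cos (z+(B:ℂ)-(a:ℂ)) * ∏ k, Complex.sin (z - (b k:ℂ)) := by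
    apply mul_right_cancel₀ h2IE
    linear_combination hA
  rw [div_eq_iff hPne, hstar, add_mul]
  congr 1
  rw [Finset.sum_mul]
  refine Finset.sum_congr rfl fun k _ => ?_
  rw [← Finset.mul_prod_erase univ _ (mem_univ k), div_mul_eq_mul_div,
    div_eq_div_iff (hDne k) (mul_ne_zero (hDne k) (hz k))]
  ring
end

section
/- Let a_0,…,a_{n+2}, b_0,…,b_n be real with b_k distinct mod π; set A = Σ_{k=0}^{n+2} a_k, B = Σ_{k=0}^{n} b_k. Then 4 Σ_{k=0}^{n} [∏_{t=0}^{n+2} sin(b_k − a_t)] / ∏_{j≠k} sin(b_k−b_j) = Σ_{k=0}^{n+2} sin(B − A + 2a_k) − Σ_{k=0}^{n} sin(B − A + 2b_k). -/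
/-!
With `x = exp (2 b I)` and `y = exp (2 a I)` one has
`sin (b - a) = (x - y) / (2 I exp (b I) exp (a I))`, and the left-hand side becomes
`(I / 2) exp ((B - A) I) * ∑ₖ P(xₖ) / (xₖ² Q'(xₖ))` with `P = ∏ₜ (X - yₜ)`, `Q = ∏ⱼ (X - xⱼ)`.
These are the residues of `P / (X² Q)` at the `xₖ`, so the sum is minus the residues at `0` and
`∞`. Concretely, write `P = P(0) + P'(0) X + X² T`: the `T` part is handled by Lagrange
interpolation (its sum is a leading coefficient), and the other two parts by the partial
fraction expansions of `1 / Q` and `Q' / Q²` at `0`. With `∏ y / ∏ x = exp (-2 (B - A) I)`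
every term `x` or `y` of the result pairs with its inverse into a sine.
-/

open Finset

namespace Lagrange
open Polynomial

variable {F : Type*} [Field F] {ι : Type*} [DecidableEq ι] {s : Finset ι} {v : ι → F}

theorem sum_eval_div_prod_erase_sub_of_natDegree_le (hvs : Set.InjOn v s) (hs : s.Nonempty)
    {P : F[X]} (hP : P.natDegree ≤ #s) :
    ∑ i ∈ s, P.eval (v i) / ∏ j ∈ s.erase i, (v i - v j)
      = P.coeff (#s - 1) + P.coeff #s * ∑ i ∈ s, v i := by
  have hQ : (nodal s v).natDegree = #s := natDegree_nodal
  have hQ1 : (nodal s v).coeff #s = 1 := hQ ▸ nodal_monic.coeff_natDegree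
  have hR : (P - C (P.coeff #s) * nodal s v).degree < #s := by
    refine degree_lt_iff_coeff_zero _ _ |>.mpr fun m hm => ?_
    have hm : #s ≤ m := by exact_mod_cast hm
    rcases hm.eq_or_lt with h | h
    · rw [← h, coeff_sub, coeff_C_mul, hQ1, mul_one, sub_self]
    · rw [coeff_sub, coeff_C_mul, coeff_eq_zero_of_natDegree_lt (hP.trans_lt h),
        coeff_eq_zero_of_natDegree_lt (hQ.trans_lt h), mul_zero, sub_zero]
  calc ∑ i ∈ s, P.eval (v i) / ∏ j ∈ s.erase i, (v i - v j)
      = ∑ i ∈ s, (P - C (P.coeff #s) * nodal s v).eval (v i) / ∏ j ∈ s.erase i, (v i - v j) :=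
        sum_congr rfl fun i hi => by
          rw [eval_sub, eval_mul, eval_nodal_at_node hi, mul_zero, sub_zero]
    _ = (P - C (P.coeff #s) * nodal s v).coeff (#s - 1) := (coeff_eq_sum hvs hR).symm
    _ = P.coeff (#s - 1) + P.coeff #s * ∑ i ∈ s, v i := by
        rw [coeff_sub, coeff_C_mul, nodal_eq, prod_X_sub_C_coeff_card_pred s v hs.card_pos]
        ring

theorem eval_derivative_nodal_eq_mul_sum_inv_sub {z : F} (hz : ∀ i ∈ s, z ≠ v i) :
    (derivative (nodal s v)).eval z = (∏ i ∈ s, (z - v i)) * ∑ i ∈ s, (z - v i)⁻¹ := by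
  rw [derivative_nodal, eval_finsetSum, mul_sum]
  refine sum_congr rfl fun i hi => ?_
  rw [eval_nodal, ← mul_prod_erase s _ hi, mul_comm, ← mul_assoc,
    inv_mul_cancel₀ (sub_ne_zero.mpr (hz i hi)), one_mul]

theorem sum_inv_mul_prod_erase_sub (hvs : Set.InjOn v s) (hs : s.Nonempty) {z : F}
    (hz : ∀ i ∈ s, z ≠ v i) :
    ∑ i ∈ s, ((z - v i) * ∏ j ∈ s.erase i, (v i - v j))⁻¹ = (∏ i ∈ s, (z - v i))⁻¹ := by
  have := eval_interpolate_not_at_node 1 hz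
  rw [interpolate_one hvs hs, eval_one, eval_nodal] at this
  rw [← eq_inv_of_mul_eq_one_right this.symm]
  refine sum_congr rfl fun i _ => ?_
  rw [nodalWeight, prod_inv_distrib, Pi.one_apply, mul_one, mul_inv, mul_comm]

theorem sum_inv_sq_mul_prod_erase_sub (hvs : Set.InjOn v s) {z : F} (hz : ∀ i ∈ s, z ≠ v i) :
    ∑ i ∈ s, ((z - v i) ^ 2 * ∏ j ∈ s.erase i, (v i - v j))⁻¹
      = (∑ i ∈ s, (z - v i)⁻¹) / ∏ i ∈ s, (z - v i) := by
  set g := nodal s v /ₘ (X - C z)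
  have hg : g.degree < #s := by
    simpa only [degree_nodal] using
      degree_divByMonic_lt (nodal s v) (X - C z) nodal_ne_zero (by simp)
  have hgz : g.eval z = (derivative (nodal s v)).eval z := by
    simpa using congrArg (eval z)
      (divByMonic_add_X_sub_C_mul_derivative_divByMonic_eq_derivative (nodal s v) z)
  have hgv : ∀ i ∈ s, g.eval (v i) = (∏ j ∈ s, (z - v j)) * (z - v i)⁻¹ := by
    intro i hi
    have := congrArg (eval (v i)) (X_sub_C_mul_divByMonic_eq_sub_modByMonic (nodal s v) z)
    simp only [modByMonic_X_sub_C_eq_C_eval, eval_mul, eval_sub, eval_X, eval_C,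
      eval_nodal_at_node hi, eval_nodal] at this
    rw [eq_mul_inv_iff_mul_eq₀ (sub_ne_zero.mpr (hz i hi))]
    linear_combination -this
  have hQ : ∏ i ∈ s, (z - v i) ≠ 0 := prod_ne_zero_iff.mpr fun i hi => sub_ne_zero.mpr (hz i hi)
  have := eval_interpolate_not_at_node (fun i => g.eval (v i)) hz
  rw [← eq_interpolate hvs hg, hgz, eval_derivative_nodal_eq_mul_sum_inv_sub hz,
    eval_nodal] at this
  have key : ∑ i ∈ s, nodalWeight s v i * (z - v i)⁻¹ * g.eval (v i)
      = (∏ i ∈ s, (z - v i)) * ∑ i ∈ s, ((z - v i) ^ 2 * ∏ j ∈ s.erase i, (v i - v j))⁻¹ := by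
    rw [mul_sum]
    refine sum_congr rfl fun i hi => ?_
    rw [hgv i hi, nodalWeight, prod_inv_distrib, mul_inv, ← inv_pow]
    ring
  rw [key] at this
  rw [eq_div_iff hQ]
  linear_combination (mul_left_cancel₀ hQ this).symm

theorem sum_eval_div_sq_mul_prod_erase_sub_of_natDegree_le (hvs : Set.InjOn v s)
    (hs : s.Nonempty) (h0 : ∀ i ∈ s, v i ≠ 0) {P : F[X]} (hP : P.natDegree ≤ #s + 2) :
    ∑ i ∈ s, P.eval (v i) / (v i ^ 2 * ∏ j ∈ s.erase i, (v i - v j))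
      = P.coeff (#s + 1) + P.coeff (#s + 2) * ∑ i ∈ s, v i
        - (P.coeff 1 + P.coeff 0 * ∑ i ∈ s, (v i)⁻¹) / ∏ i ∈ s, -v i := by
  set T := P.divX.divX
  have hT : T.natDegree ≤ #s := by
    simp only [T, natDegree_divX_eq_natDegree_tsub_one]
    omega
  have hTcoeff (m : ℕ) : T.coeff m = P.coeff (m + 2) := by simp only [T, coeff_divX]
  have hPeval (x : F) : P.eval x = P.coeff 0 + P.coeff 1 * x + x ^ 2 * T.eval x := by
    conv_lhs => rw [← X_mul_divX_add P, ← X_mul_divX_add P.divX]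
    simp only [eval_add, eval_mul, eval_X, eval_C, coeff_divX, T]
    ring
  have hz : ∀ i ∈ s, (0 : F) ≠ v i := fun i hi => (h0 i hi).symm
  calc ∑ i ∈ s, P.eval (v i) / (v i ^ 2 * ∏ j ∈ s.erase i, (v i - v j))
      = ∑ i ∈ s, (P.coeff 0 * ((0 - v i) ^ 2 * ∏ j ∈ s.erase i, (v i - v j))⁻¹
          - P.coeff 1 * ((0 - v i) * ∏ j ∈ s.erase i, (v i - v j))⁻¹
          + T.eval (v i) / ∏ j ∈ s.erase i, (v i - v j)) :=
        sum_congr rfl fun i hi => by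
          rw [hPeval]
          field_simp [h0 i hi]
          ring
    _ = P.coeff 0 * ∑ i ∈ s, ((0 - v i) ^ 2 * ∏ j ∈ s.erase i, (v i - v j))⁻¹
          - P.coeff 1 * ∑ i ∈ s, ((0 - v i) * ∏ j ∈ s.erase i, (v i - v j))⁻¹
          + ∑ i ∈ s, T.eval (v i) / ∏ j ∈ s.erase i, (v i - v j) := by
        rw [sum_add_distrib, sum_sub_distrib, mul_sum, mul_sum]
    _ = _ := by
        rw [sum_inv_sq_mul_prod_erase_sub hvs hz, sum_inv_mul_prod_erase_sub hvs hs hz,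
          sum_eval_div_prod_erase_sub_of_natDegree_le hvs hs hT, hTcoeff, hTcoeff,
          show #s - 1 + 2 = #s + 1 by have := hs.card_pos; omega]
        simp only [zero_sub, inv_neg, sum_neg_distrib]
        ring

theorem sum_prod_sub_div_sq_mul_prod_erase_sub {κ : Type*} {t : Finset κ} {y : κ → F}
    (hvs : Set.InjOn v s) (hs : s.Nonempty) (h0 : ∀ i ∈ s, v i ≠ 0) (hy0 : ∀ k ∈ t, y k ≠ 0)
    (hcard : #t = #s + 2) :
    ∑ i ∈ s, (∏ k ∈ t, (v i - y k)) / (v i ^ 2 * ∏ j ∈ s.erase i, (v i - v j))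
      = ∑ i ∈ s, v i - ∑ k ∈ t, y k
        + (∏ k ∈ t, y k) / (∏ i ∈ s, v i) * (∑ k ∈ t, (y k)⁻¹ - ∑ i ∈ s, (v i)⁻¹) := by
  have hP : (nodal t y).natDegree = #s + 2 := by rw [natDegree_nodal, hcard]
  have hlead : (nodal t y).coeff (#s + 2) = 1 := hP ▸ nodal_monic.coeff_natDegree
  have hnext : (nodal t y).coeff (#s + 1) = -∑ k ∈ t, y k := by
    rw [nodal_eq, show #s + 1 = #t - 1 by omega, prod_X_sub_C_coeff_card_pred t y (by omega)]
  have hconst : (nodal t y).coeff 0 = ∏ k ∈ t, -y k := by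
    rw [coeff_zero_eq_eval_zero, eval_nodal]
    simp only [zero_sub]
  have hlin : (nodal t y).coeff 1 = -(∏ k ∈ t, -y k) * ∑ k ∈ t, (y k)⁻¹ := by
    classical
    have := eval_derivative_nodal_eq_mul_sum_inv_sub (s := t) (v := y) (z := 0)
      fun k hk => (hy0 k hk).symm
    rw [← coeff_zero_eq_eval_zero, coeff_derivative] at this
    simp only [zero_sub, inv_neg, sum_neg_distrib, Nat.cast_zero, zero_add, mul_one] at this
    rw [this]
    ring
  have := sum_eval_div_sq_mul_prod_erase_sub_of_natDegree_le hvs hs h0 hP.le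
  simp only [eval_nodal, hlead, hnext, hconst, hlin] at this
  rw [this, prod_neg, prod_neg, hcard, pow_add]
  have hv : ∏ i ∈ s, v i ≠ 0 := prod_ne_zero_iff.mpr h0
  field_simp
  ring

end Lagrange

namespace Complex

variable {ι κ : Type*} [DecidableEq ι]

theorem sin_sub_eq_exp (u v : ℂ) :
    sin (u - v) = (exp (2 * u * I) - exp (2 * v * I)) / (2 * I * exp (u * I) * exp (v * I)) := by
  have h1 : exp (-(u - v) * I) * exp (u * I) * exp (v * I) = exp (2 * v * I) := by
    rw [← exp_add, ← exp_add]; ring_nf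
  have h2 : exp ((u - v) * I) * exp (u * I) * exp (v * I) = exp (2 * u * I) := by
    rw [← exp_add, ← exp_add]; ring_nf
  rw [sin, eq_div_iff (by simp [exp_ne_zero])]
  linear_combination I ^ 2 * h1 - I ^ 2 * h2 + (exp (2 * v * I) - exp (2 * u * I)) * I_sq

theorem prod_sin_sub_eq_exp (t : Finset κ) (u : ℂ) (v : κ → ℂ) :
    ∏ k ∈ t, sin (u - v k)
      = (∏ k ∈ t, (exp (2 * u * I) - exp (2 * v k * I)))
        / ((2 * I) ^ #t * exp (u * I) ^ #t * exp ((∑ k ∈ t, v k) * I)) := by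
  simp only [sin_sub_eq_exp, prod_div_distrib, prod_mul_distrib, prod_const, sum_mul, exp_sum,
    mul_pow]

theorem prod_sin_sub_div_prod_sin_sub_eq_exp {s : Finset ι} {t : Finset κ}
    (hcard : #t = #s + 2) (a : κ → ℂ) (b : ι → ℂ) {k : ι} (hk : k ∈ s) :
    (∏ m ∈ t, sin (b k - a m)) / ∏ j ∈ s.erase k, sin (b k - b j)
      = I / 8 * exp ((∑ j ∈ s, b j - ∑ m ∈ t, a m) * I)
        * ((∏ m ∈ t, (exp (2 * b k * I) - exp (2 * a m * I)))
          / (exp (2 * b k * I) ^ 2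
            * ∏ j ∈ s.erase k, (exp (2 * b k * I) - exp (2 * b j * I)))) := by
  have hcard' : #t = #(s.erase k) + 3 := by have := card_erase_add_one hk; omega
  rw [prod_sin_sub_eq_exp, prod_sin_sub_eq_exp, sum_erase_eq_sub hk, hcard']
  have hx : exp (2 * b k * I) = exp (b k * I) ^ 2 := by rw [← exp_nat_mul]; ring_nf
  rw [hx, sub_mul, sub_mul, exp_sub, exp_sub]
  field_simp
  ring_nf
  rw [I_pow_four]
  ring

theorem I_div_two_mul_exp_mul_sub_eq_neg_sin (c u : ℂ) :
    I / 2 * exp (c * I) * (exp (2 * u * I) - exp (-(2 * c * I)) * (exp (2 * u * I))⁻¹)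
      = -sin (c + 2 * u) := by
  have h1 : exp (c * I) * exp (2 * u * I) = exp ((c + 2 * u) * I) := by
    rw [← exp_add]; ring_nf
  have h2 : exp (c * I) * exp (-(2 * c * I)) * exp (-(2 * u * I)) = exp (-(c + 2 * u) * I) := by
    rw [← exp_add, ← exp_add]; ring_nf
  rw [sin, ← exp_neg]
  linear_combination I / 2 * h1 - I / 2 * h2

theorem sum_prod_sin_sub_div_prod_sin_sub {s : Finset ι} {t : Finset κ} (hs : s.Nonempty)
    (hcard : #t = #s + 2) (a : κ → ℂ) (b : ι → ℂ)
    (hb : (s : Set ι).Pairwise fun j k => sin (b j - b k) ≠ 0) :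
    4 * ∑ k ∈ s, (∏ m ∈ t, sin (b k - a m)) / ∏ j ∈ s.erase k, sin (b k - b j)
      = ∑ m ∈ t, sin (∑ j ∈ s, b j - ∑ m ∈ t, a m + 2 * a m)
        - ∑ k ∈ s, sin (∑ j ∈ s, b j - ∑ m ∈ t, a m + 2 * b k) := by
  set c := ∑ j ∈ s, b j - ∑ m ∈ t, a m
  set x := fun j => exp (2 * b j * I)
  set y := fun m => exp (2 * a m * I)
  have hx : Set.InjOn x s := fun j hj k hk hjk => by
    by_contra hne
    exact hb hj hk hne (by rw [sin_sub_eq_exp]; simp only [x] at hjk; rw [hjk, sub_self, zero_div])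
  have hK : (∏ m ∈ t, y m) / ∏ j ∈ s, x j = exp (-(2 * c * I)) := by
    simp only [x, y, ← exp_sum, ← exp_sub, c]
    congr 1
    simp only [← sum_mul, ← mul_sum]
    ring
  have hsum : ∑ j ∈ s, x j - ∑ m ∈ t, y m
      + (∏ m ∈ t, y m) / (∏ j ∈ s, x j) * (∑ m ∈ t, (y m)⁻¹ - ∑ j ∈ s, (x j)⁻¹)
      = ∑ j ∈ s, (x j - exp (-(2 * c * I)) * (x j)⁻¹)
        - ∑ m ∈ t, (y m - exp (-(2 * c * I)) * (y m)⁻¹) := by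
    simp only [hK, sum_sub_distrib, ← mul_sum]
    ring
  calc 4 * ∑ k ∈ s, (∏ m ∈ t, sin (b k - a m)) / ∏ j ∈ s.erase k, sin (b k - b j)
      = I / 2 * exp (c * I)
        * ∑ k ∈ s, (∏ m ∈ t, (x k - y m)) / (x k ^ 2 * ∏ j ∈ s.erase k, (x k - x j)) := by
        rw [sum_congr rfl fun k hk => prod_sin_sub_div_prod_sin_sub_eq_exp hcard a b hk, ← mul_sum]
        ring
    _ = I / 2 * exp (c * I) * (∑ j ∈ s, (x j - exp (-(2 * c * I)) * (x j)⁻¹)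
        - ∑ m ∈ t, (y m - exp (-(2 * c * I)) * (y m)⁻¹)) := by
        rw [Lagrange.sum_prod_sub_div_sq_mul_prod_erase_sub hx hs (fun _ _ => exp_ne_zero _)
          (fun _ _ => exp_ne_zero _) hcard, hsum]
    _ = _ := by
        rw [mul_sub, mul_sum, mul_sum]
        simp only [x, y, I_div_two_mul_exp_mul_sub_eq_neg_sin, sum_neg_distrib]
        ring

end Complex

theorem sine_sum_identity_kappa2 (n : ℕ) (a : Fin (n + 3) → ℝ) (b : Fin (n + 1) → ℝ)
    (hb : ∀ j k, j ≠ k → Real.sin (b j - b k) ≠ 0)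
    (A B : ℝ) (hA : A = ∑ k, a k) (hB : B = ∑ k, b k) :
    4 * ∑ k, (∏ t, Real.sin (b k - a t)) / ∏ j ∈ univ.erase k, Real.sin (b k - b j)
      = (∑ k, Real.sin (B - A + 2 * a k)) - ∑ k, Real.sin (B - A + 2 * b k) := by
  subst hA hB
  apply Complex.ofReal_injective
  push_cast
  exact Complex.sum_prod_sin_sub_div_prod_sin_sub univ_nonempty (by simp) _ _
    fun j _ k _ hjk => by exact_mod_cast hb j k hjk
end
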